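/- Let U be the positive radial ground state solution of -ΔU + U - U^p = 0 on ℝ^N, which satisfies U(x) ≤ C e^{-|x|}|x|^{(1-N)/2} for large |x|. Fix σ > 0 and points a_j = 2jσ on the x₁-axis for j ∈ ℤ \ {0}. Then there exists C (independent of σ) such that for every x with |x₁| ≤ σ, Σ_{j ∈ ℤ, j ≠ 0} U(x₁ - 2jσ, x') ≤ C e^{-2σ} σ^{(1-N)/2} e^{|x|}. -/

import Mathlib

/-!
For `|x₁| ≤ σ` and `j ≠ 0`, the point `x - 2jσ e₁` has norm at least `σ` (look at its first
coordinate) and at least `2|j|σ - ‖x‖` (triangle inequality). The first bound makes the decay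
hypothesis applicable and turns `‖·‖^((1-N)/2)` into `σ^((1-N)/2)`; the second, together with
`2|j|σ ≥ 2σ + 2|j| - 2` for `σ ≥ 1`, gives `e^{-‖·‖} ≤ e² e^{-2σ} e^{‖x‖} e^{-2|j|}`, and
`∑ e^{-2|j|}` converges.
-/

open Real

noncomputable def e1 (N : ℕ) : EuclideanSpace ℝ (Fin N) :=
  if h : 0 < N then EuclideanSpace.single (⟨0, h⟩ : Fin N) (1 : ℝ) else 0

section LatticeGeometry

variable {N : ℕ}

lemma norm_e1 (hN : 0 < N) : ‖e1 N‖ = 1 := by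
  simp [e1, hN]

lemma sub_smul_e1_apply_zero (hN : 0 < N) (x : EuclideanSpace ℝ (Fin N)) (c : ℝ) :
    (x - c • e1 N) ⟨0, hN⟩ = x ⟨0, hN⟩ - c := by
  simp [e1, hN]

lemma abs_sub_le_norm_sub_smul_e1 (hN : 0 < N) (x : EuclideanSpace ℝ (Fin N)) (c : ℝ) :
    |x ⟨0, hN⟩ - c| ≤ ‖x - c • e1 N‖ := by
  simpa [sub_smul_e1_apply_zero hN] using PiLp.norm_apply_le (x - c • e1 N) ⟨0, hN⟩

lemma abs_sub_norm_le_norm_sub_smul_e1 (hN : 0 < N) (x : EuclideanSpace ℝ (Fin N)) (c : ℝ) :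
    |c| - ‖x‖ ≤ ‖x - c • e1 N‖ := by
  simpa [norm_smul, norm_e1 hN, norm_sub_rev] using norm_sub_norm_le (c • e1 N) x

lemma le_norm_sub_lattice_point (hN : 0 < N) {σ : ℝ} (hσ : 0 ≤ σ)
    {x : EuclideanSpace ℝ (Fin N)} (hx : |x ⟨0, hN⟩| ≤ σ) {j : ℤ} (hj : j ≠ 0) :
    σ ≤ ‖x - (2 * j * σ) • e1 N‖ := by
  have hj1 : (1 : ℝ) ≤ |(j : ℝ)| := by exact_mod_cast Int.one_le_abs hj
  have hcoord := abs_sub_le_norm_sub_smul_e1 hN x (2 * j * σ)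
  have hrev := abs_sub_abs_le_abs_sub (2 * j * σ) (x ⟨0, hN⟩)
  rw [abs_sub_comm, abs_mul, abs_mul, abs_two, abs_of_nonneg hσ] at hrev
  nlinarith

end LatticeGeometry

lemma exp_neg_le_of_two_mul_mul_sub_le {σ t a r : ℝ} (hσ : 1 ≤ σ) (ht : 1 ≤ t)
    (h : 2 * t * σ - a ≤ r) :
    exp (-r) ≤ exp 2 * exp (-2 * σ) * exp a * exp (-2 * t) := by
  rw [← exp_add, ← exp_add, ← exp_add, exp_le_exp]
  nlinarith

lemma summable_exp_neg_mul_abs_int {c : ℝ} (hc : 0 < c) :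
    Summable fun j : ℤ => exp (-c * |(j : ℝ)|) := by
  have h : Summable fun n : ℕ => exp (n * -c) := summable_exp_nat_mul_iff.mpr (by linarith)
  refine .of_nat_of_neg ?_ ?_ <;> simpa [mul_comm] using h

lemma apply_sub_lattice_point_le {N : ℕ} (hN : 0 < N) {U : EuclideanSpace ℝ (Fin N) → ℝ}
    {C₀ A s : ℝ} (hC₀ : 0 ≤ C₀) (hs : s ≤ 0)
    (hUb : ∀ y : EuclideanSpace ℝ (Fin N), A ≤ ‖y‖ → U y ≤ C₀ * exp (-‖y‖) * ‖y‖ ^ s)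
    {σ : ℝ} (hσ1 : 1 ≤ σ) (hσA : A ≤ σ) {x : EuclideanSpace ℝ (Fin N)} (hx : |x ⟨0, hN⟩| ≤ σ)
    {j : ℤ} (hj : j ≠ 0) :
    U (x - (2 * j * σ) • e1 N)
      ≤ C₀ * exp 2 * exp (-2 * σ) * σ ^ s * exp ‖x‖ * exp (-2 * |(j : ℝ)|) := by
  set y := x - (2 * j * σ) • e1 N
  have hσy : σ ≤ ‖y‖ := le_norm_sub_lattice_point hN (by linarith) hx hj
  have hdist : 2 * |(j : ℝ)| * σ - ‖x‖ ≤ ‖y‖ := by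
    simpa [abs_mul, abs_of_nonneg (by linarith : (0 : ℝ) ≤ σ)] using
      abs_sub_norm_le_norm_sub_smul_e1 hN x (2 * j * σ)
  have hexp := exp_neg_le_of_two_mul_mul_sub_le hσ1
    (by exact_mod_cast Int.one_le_abs hj) hdist
  have hpow : ‖y‖ ^ s ≤ σ ^ s := rpow_le_rpow_of_nonpos (by linarith) hσy hs
  calc U y ≤ C₀ * exp (-‖y‖) * ‖y‖ ^ s := hUb y (hσA.trans hσy)
    _ ≤ C₀ * (exp 2 * exp (-2 * σ) * exp ‖x‖ * exp (-2 * |(j : ℝ)|)) * σ ^ s := by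
      gcongr
    _ = _ := by ring

/-- Sum of exponentially decaying bumps centered at the lattice points `(2jσ, 0)`,
`j ∈ ℤ \ {0}`, evaluated in the central cell `|x₁| ≤ σ`, is bounded by
`C e^{-2σ} σ^{(1-N)/2} e^{|x|}`, with `C` independent of `σ`. -/
theorem stmt8 (N : ℕ) (hN : 2 ≤ N)
    (U : EuclideanSpace ℝ (Fin N) → ℝ)
    (C₀ A : ℝ) (hC₀ : 0 < C₀)
    (hUb : ∀ x : EuclideanSpace ℝ (Fin N), A ≤ ‖x‖ →
      U x ≤ C₀ * Real.exp (-‖x‖) * ‖x‖ ^ (((1 : ℝ) - N) / 2)) :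
    ∃ C > 0, ∀ σ : ℝ, 1 ≤ σ → A ≤ σ →
      ∀ x : EuclideanSpace ℝ (Fin N), |x (⟨0, by omega⟩ : Fin N)| ≤ σ →
        (∑' j : {j : ℤ // j ≠ 0}, U (x - (2 * ((j : ℤ) : ℝ) * σ) • e1 N))
          ≤ C * Real.exp (-2 * σ) * σ ^ (((1 : ℝ) - N) / 2) * Real.exp ‖x‖ := by
  have hs : ((1 : ℝ) - N) / 2 ≤ 0 := by
    have : (2 : ℝ) ≤ N := by exact_mod_cast hN
    linarith
  have hsum := summable_exp_neg_mul_abs_int two_pos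
  set S := ∑' j : ℤ, exp (-2 * |(j : ℝ)|)
  have hS : 0 < S := hsum.tsum_pos (fun _ => (exp_pos _).le) 0 (exp_pos _)
  refine ⟨C₀ * exp 2 * S, by positivity, fun σ hσ1 hσA x hx => ?_⟩
  -- no summability needed: a non-summable family has `tsum` equal to `0`
  refine tsum_le_of_sum_le' (by positivity) fun t => ?_
  calc ∑ j ∈ t, U (x - (2 * (j : ℤ) * σ) • e1 N)
      ≤ ∑ j ∈ t, C₀ * exp 2 * exp (-2 * σ) * σ ^ (((1 : ℝ) - N) / 2) * exp ‖x‖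
          * exp (-2 * |((j : ℤ) : ℝ)|) :=
        Finset.sum_le_sum fun j _ =>
          apply_sub_lattice_point_le (by omega) hC₀.le hs hUb hσ1 hσA hx j.2
    _ = C₀ * exp 2 * exp (-2 * σ) * σ ^ (((1 : ℝ) - N) / 2) * exp ‖x‖
          * ∑ j ∈ t.map (.subtype _), exp (-2 * |(j : ℝ)|) := by
        rw [Finset.sum_map, Finset.mul_sum]
        rfl
    _ ≤ C₀ * exp 2 * exp (-2 * σ) * σ ^ (((1 : ℝ) - N) / 2) * exp ‖x‖ * S := by
        gcongr
        exact hsum.sum_le_tsum _ fun _ _ => (exp_pos _).le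
    _ = C₀ * exp 2 * S * exp (-2 * σ) * σ ^ (((1 : ℝ) - N) / 2) * exp ‖x‖ := by ring
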